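/- Let t ≥ 1, let C_t be the set of t-good customers, let X ⊆ F hit every set S_c = {c} ∪ {good facilities for c} for c ∈ C_t, let C'' ⊆ C_t be the t-good customers not covered by X, and for each c ∈ C'' choose f_c ∈ X ∩ S_c with unique neighbor x_c on all shortest paths from c to f_c, and set F_c = {c} ∪ {f ∈ F : f ≠ c and every shortest path from c to f avoids x_c}. Then any hitting set Y of the family {F_c : c ∈ C''} is such that X ∪ Y is a setwise-disjoint cover of C_t. -/

import Mathlib

/-- `IsDiPath A a b p` asserts that the list of vertices `p` is a simple directed
path from `a` to `b` in the directed graph with arc relation `A`. -/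
def IsDiPath {V : Type*} (A : V → V → Prop) (a b : V) (p : List V) : Prop :=
  p.head? = some a ∧ p.getLast? = some b ∧ List.Chain' A p ∧ p.Nodup

/-- The arcs traversed by a path: the list of consecutive pairs of vertices. -/
def pathArcs {V : Type*} (p : List V) : List (V × V) :=
  p.zip p.tail

/-- The total weight of a path: the sum of the weights of its arcs. -/
def pathWeight {V : Type*} (w : V → V → ℝ) (p : List V) : ℝ :=
  ((p.zip p.tail).map fun e => w e.1 e.2).sum

/-- `p` is a shortest (minimum total weight) directed path from `a` to `b`. -/
def IsShortestDiPath {V : Type*} (A : V → V → Prop) (w : V → V → ℝ) (a b : V)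
    (p : List V) : Prop :=
  IsDiPath A a b p ∧ ∀ q, IsDiPath A a b q → pathWeight w p ≤ pathWeight w q

/-- The pair `{f₁, f₂}` covers `c` in a pathwise-disjoint fashion: there are shortest
paths from `c` to `f₁` and from `c` to `f₂` with no common vertex except `c`. -/
def CoversPathwise {V : Type*} (A : V → V → Prop) (w : V → V → ℝ) (c f₁ f₂ : V) : Prop :=
  ∃ p₁ p₂, IsShortestDiPath A w c f₁ p₁ ∧ IsShortestDiPath A w c f₂ p₂ ∧
    ∀ v ∈ p₁, v ∈ p₂ → v = c

/-- The pair `{f₁, f₂}` covers `c` in a setwise-disjoint fashion: no shortest path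
from `c` to `f₁` shares a vertex other than `c` with any shortest path from `c` to `f₂`. -/
def CoversSetwise {V : Type*} (A : V → V → Prop) (w : V → V → ℝ) (c f₁ f₂ : V) : Prop :=
  ∀ p₁ p₂, IsShortestDiPath A w c f₁ p₁ → IsShortestDiPath A w c f₂ p₂ →
    ∀ v ∈ p₁, v ∈ p₂ → v = c

/-- `F'` is a pathwise-disjoint cover for the customers `C` (facilities drawn from `F`). -/
def IsPathwiseCover {V : Type*} (A : V → V → Prop) (w : V → V → ℝ) (C F F' : Set V) : Prop :=
  F' ⊆ F ∧ ∀ c ∈ C, c ∉ F' → ∃ f₁ ∈ F', ∃ f₂ ∈ F', f₁ ≠ f₂ ∧ f₁ ≠ c ∧ f₂ ≠ c ∧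
    CoversPathwise A w c f₁ f₂

/-- `F'` is a setwise-disjoint cover for the customers `C` (facilities drawn from `F`). -/
def IsSetwiseCover {V : Type*} (A : V → V → Prop) (w : V → V → ℝ) (C F F' : Set V) : Prop :=
  F' ⊆ F ∧ ∀ c ∈ C, c ∉ F' → ∃ f₁ ∈ F', ∃ f₂ ∈ F', f₁ ≠ f₂ ∧ f₁ ≠ c ∧ f₂ ≠ c ∧
    CoversSetwise A w c f₁ f₂

/-- `spNbrs A w c f` : the set `N(c,f)` of out-neighbours `x` of `c` that lie on
some shortest path from `c` to `f`. -/
def spNbrs {V : Type*} (A : V → V → Prop) (w : V → V → ℝ) (c f : V) : Set V :=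
  {x | A c x ∧ ∃ p, IsShortestDiPath A w c f p ∧ x ∈ p}

/-- A facility `f` is *good* for a customer `c` if `f ≠ c` and `|N(c,f)| = 1`,
i.e. all shortest paths from `c` to `f` leave `c` via the same arc. -/
def GoodFor {V : Type*} (A : V → V → Prop) (w : V → V → ℝ) (F : Set V) (c f : V) : Prop :=
  f ∈ F ∧ f ≠ c ∧ (spNbrs A w c f).ncard = 1

/-- `C_t` : the set of `t`-good customers, i.e. customers with at least `t` good facilities. -/
def tGoodCustomers {V : Type*} (A : V → V → Prop) (w : V → V → ℝ) (C F : Set V) (t : ℕ) :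
    Set V :=
  {c ∈ C | t ≤ {f | GoodFor A w F c f}.ncard}

/-- `S_c` : the customer `c` together with all good facilities for `c`. -/
def Sgood {V : Type*} (A : V → V → Prop) (w : V → V → ℝ) (F : Set V) (c : V) : Set V :=
  {c} ∪ {f | GoodFor A w F c f}

/-- The customer `c` is covered by the set `X`: either `c ∈ X`, or some pair of
distinct facilities in `X - {c}` covers `c` in a setwise-disjoint fashion. -/
def CoveredBy {V : Type*} (A : V → V → Prop) (w : V → V → ℝ) (X : Set V) (c : V) : Prop :=
  c ∈ X ∨ ∃ f₁ ∈ X, ∃ f₂ ∈ X, f₁ ≠ f₂ ∧ f₁ ≠ c ∧ f₂ ≠ c ∧ CoversSetwise A w c f₁ f₂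

/-- `F_c` : the customer `c` together with all facilities `f ≠ c` all of whose
shortest paths from `c` avoid the vertex `x`. -/
def Favoid {V : Type*} (A : V → V → Prop) (w : V → V → ℝ) (F : Set V) (x c : V) : Set V :=
  {c} ∪ {f ∈ F | f ≠ c ∧ ∀ p, IsShortestDiPath A w c f p → x ∉ p}

/-!
If every shortest path from `c` to `f` leaves `c` through `x` and no shortest path from `c`
to `g` meets `x`, then `{f, g}` covers `c` setwise. Indeed, if shortest paths to `f` and to `g`
met at some `v ≠ c`, then, weights being positive, the prefix of the path to `f` up to `v` is
no heavier than that of the path to `g`, so splicing it onto the path to `g` gives a shortest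
path to `g` through `x`. A `t`-good customer not covered by `X` is therefore covered by `f_c ∈ X`
together with a vertex of `Y ∩ F_c`.
-/

section

variable {V : Type*} {A : V → V → Prop} {w : V → V → ℝ} {a b c f g v x : V}

def IsDiWalk (A : V → V → Prop) (a b : V) (p : List V) : Prop :=
  p.head? = some a ∧ p.getLast? = some b ∧ p.IsChain A

lemma isDiPath_iff {p : List V} : IsDiPath A a b p ↔ IsDiWalk A a b p ∧ p.Nodup := by
  simp only [IsDiPath, IsDiWalk, and_assoc]
  rfl

lemma IsShortestDiPath.isDiWalk {p : List V} (h : IsShortestDiPath A w a b p) :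
    IsDiWalk A a b p :=
  (isDiPath_iff.1 h.1).1

lemma IsDiWalk.splice {a' b' : V} {s₁ t₁ s₂ t₂ : List V} (h₁ : IsDiWalk A a b (s₁ ++ v :: t₁))
    (h₂ : IsDiWalk A a' b' (s₂ ++ v :: t₂)) : IsDiWalk A a b' (s₁ ++ v :: t₂) := by
  obtain ⟨hhead₁, -, hchain₁⟩ := h₁
  obtain ⟨-, hlast₂, hchain₂⟩ := h₂
  refine ⟨by simpa using hhead₁, by simpa [List.getLast?_append_cons] using hlast₂, ?_⟩
  exact List.isChain_split.2 ⟨(List.isChain_split.1 hchain₁).1, (List.isChain_split.1 hchain₂).2⟩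

@[simp] lemma pathWeight_nil : pathWeight w [] = 0 := rfl

@[simp] lemma pathWeight_singleton : pathWeight w [a] = 0 := rfl

@[simp] lemma pathWeight_cons_cons (l : List V) :
    pathWeight w (a :: b :: l) = w a b + pathWeight w (b :: l) := rfl

lemma pathWeight_append_cons (w : V → V → ℝ) (v : V) :
    ∀ s t : List V, pathWeight w (s ++ v :: t) = pathWeight w (s ++ [v]) + pathWeight w (v :: t)
  | [], t => by simp
  | [a], t => by simp
  | a :: b :: s, t => by
    have ih := pathWeight_append_cons w v (b :: s) t
    simp only [List.cons_append] at ih ⊢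
    rw [pathWeight_cons_cons, pathWeight_cons_cons, ih, add_assoc]

lemma pathWeight_nonneg (hw : ∀ x y, A x y → 0 < w x y) :
    ∀ {l : List V}, l.IsChain A → 0 ≤ pathWeight w l
  | [], _ | [_], _ => le_rfl
  | a :: b :: l, h => by
    rw [List.isChain_cons_cons] at h
    simpa using add_nonneg (hw a b h.1).le (pathWeight_nonneg hw h.2)

lemma pathWeight_pos (hw : ∀ x y, A x y → 0 < w x y) {l : List V}
    (h : (a :: b :: l).IsChain A) : 0 < pathWeight w (a :: b :: l) := by
  rw [List.isChain_cons_cons] at h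
  simpa using add_pos_of_pos_of_nonneg (hw a b h.1) (pathWeight_nonneg hw h.2)

lemma List.exists_eq_append_cons_append_cons_of_not_nodup :
    ∀ {l : List V}, ¬ l.Nodup → ∃ u l₁ l₂ l₃, l = l₁ ++ u :: (l₂ ++ u :: l₃)
  | [], h => absurd List.nodup_nil h
  | y :: l, h => by
    by_cases hy : y ∈ l
    · obtain ⟨l₂, l₃, rfl⟩ := List.append_of_mem hy
      exact ⟨y, [], l₂, l₃, rfl⟩
    · obtain ⟨u, l₁, l₂, l₃, rfl⟩ :=
        exists_eq_append_cons_append_cons_of_not_nodup fun hl => h (List.nodup_cons.2 ⟨hy, hl⟩)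
      exact ⟨u, y :: l₁, l₂, l₃, rfl⟩

lemma IsShortestDiPath.exists_mem_spNbrs_of_mem_prefix {s t : List V}
    (h : IsShortestDiPath A w c f (s ++ v :: t)) (hv : v ≠ c) :
    ∃ x ∈ spNbrs A w c f, x ∈ s ++ [v] := by
  obtain ⟨hhead, -, hchain⟩ := h.isDiWalk
  obtain _ | ⟨c', s⟩ := s
  · exact absurd (by simpa using hhead) hv
  obtain rfl : c' = c := by simpa using hhead
  obtain ⟨y, r, hy⟩ : ∃ y r, s ++ [v] = y :: r := List.exists_cons_of_ne_nil (by simp)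
  have hpath : c' :: s ++ v :: t = c' :: y :: (r ++ t) := by
    rw [List.cons_append, ← List.cons_append (a := y), ← hy, List.append_assoc,
      List.singleton_append]
  rw [hpath, List.isChain_cons_cons] at hchain
  refine ⟨y, ⟨hchain.1, _, h, by simp [hpath]⟩, by simp [hy]⟩

section PositiveWeights

variable (hw : ∀ x y, A x y → 0 < w x y)
include hw

lemma IsDiWalk.exists_shorter {l : List V} (h : IsDiWalk A a b l) (hl : ¬ l.Nodup) :
    ∃ l', IsDiWalk A a b l' ∧ l'.length < l.length ∧ pathWeight w l' < pathWeight w l := by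
  obtain ⟨u, l₁, l₂, l₃, rfl⟩ := List.exists_eq_append_cons_append_cons_of_not_nodup hl
  have h' : IsDiWalk A a b ((l₁ ++ u :: l₂) ++ u :: l₃) := by simpa using h
  refine ⟨l₁ ++ u :: l₃, h.splice h', by simp, ?_⟩
  obtain ⟨y, r, hy⟩ : ∃ y r, l₂ ++ [u] = y :: r := List.exists_cons_of_ne_nil (by simp)
  have hcycle : 0 < pathWeight w (u :: (l₂ ++ [u])) := by
    have hchain := (List.isChain_cons_split.1 (List.isChain_split.1 h.2.2).2).1
    rw [hy] at hchain ⊢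
    exact pathWeight_pos hw hchain
  have hsplit : pathWeight w (l₁ ++ u :: (l₂ ++ u :: l₃)) =
      pathWeight w (l₁ ++ [u]) + pathWeight w (u :: (l₂ ++ [u])) + pathWeight w (u :: l₃) := by
    rw [pathWeight_append_cons w u l₁, ← List.cons_append, pathWeight_append_cons w u (u :: l₂),
      List.cons_append, add_assoc]
  rw [hsplit, pathWeight_append_cons w u l₁ l₃]
  linarith

lemma IsDiWalk.exists_isDiPath_weight_le {l : List V} (h : IsDiWalk A a b l) :
    ∃ p, IsDiPath A a b p ∧ pathWeight w p ≤ pathWeight w l := by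
  by_cases hl : l.Nodup
  · exact ⟨l, isDiPath_iff.2 ⟨h, hl⟩, le_rfl⟩
  · obtain ⟨l', h', hlen, hlt⟩ := h.exists_shorter hw hl
    obtain ⟨p, hp, hle⟩ := h'.exists_isDiPath_weight_le
    exact ⟨p, hp, hle.trans hlt.le⟩
termination_by l.length
decreasing_by exact hlen

lemma IsDiWalk.exists_isDiPath_weight_lt {l : List V} (h : IsDiWalk A a b l) (hl : ¬ l.Nodup) :
    ∃ p, IsDiPath A a b p ∧ pathWeight w p < pathWeight w l := by
  obtain ⟨l', h', -, hlt⟩ := h.exists_shorter hw hl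
  obtain ⟨p, hp, hle⟩ := h'.exists_isDiPath_weight_le hw
  exact ⟨p, hp, hle.trans_lt hlt⟩

lemma IsShortestDiPath.weight_le_of_isDiWalk {p q : List V} (hp : IsShortestDiPath A w a b p)
    (hq : IsDiWalk A a b q) : pathWeight w p ≤ pathWeight w q := by
  obtain ⟨r, hr, hle⟩ := hq.exists_isDiPath_weight_le hw
  exact (hp.2 r hr).trans hle

lemma IsDiWalk.isShortestDiPath_of_weight_le {p q : List V} (hq : IsDiWalk A a b q)
    (hp : IsShortestDiPath A w a b p) (hle : pathWeight w q ≤ pathWeight w p) :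
    IsShortestDiPath A w a b q := by
  refine ⟨isDiPath_iff.2 ⟨hq, ?_⟩, fun r hr => hle.trans (hp.2 r hr)⟩
  by_contra hnd
  obtain ⟨r, hr, hlt⟩ := hq.exists_isDiPath_weight_lt hw hnd
  linarith [hp.2 r hr]

lemma IsShortestDiPath.splice {b' : V} {s₁ t₁ s₂ t₂ : List V}
    (h₁ : IsShortestDiPath A w a b (s₁ ++ v :: t₁))
    (h₂ : IsShortestDiPath A w a b' (s₂ ++ v :: t₂)) :
    IsShortestDiPath A w a b' (s₁ ++ v :: t₂) := by
  have hprefix : pathWeight w (s₁ ++ [v]) ≤ pathWeight w (s₂ ++ [v]) := by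
    have := h₁.weight_le_of_isDiWalk hw (h₂.isDiWalk.splice h₁.isDiWalk)
    rw [pathWeight_append_cons, pathWeight_append_cons w v s₂] at this
    linarith
  refine (h₁.isDiWalk.splice h₂.isDiWalk).isShortestDiPath_of_weight_le hw h₂ ?_
  rw [pathWeight_append_cons, pathWeight_append_cons w v s₂]
  linarith

lemma coversSetwise_of_spNbrs_eq_singleton (hx : spNbrs A w c f = {x})
    (hg : ∀ p, IsShortestDiPath A w c g p → x ∉ p) :
    CoversSetwise A w c f g := by
  intro p₁ p₂ hp₁ hp₂ v hv₁ hv₂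
  by_contra hv
  obtain ⟨s₁, t₁, rfl⟩ := List.append_of_mem hv₁
  obtain ⟨s₂, t₂, rfl⟩ := List.append_of_mem hv₂
  obtain ⟨y, hy, hys⟩ := hp₁.exists_mem_spNbrs_of_mem_prefix hv
  obtain rfl : y = x := by simpa [hx] using hy
  refine hg _ (hp₁.splice hw hp₂) ?_
  rw [List.mem_append, List.mem_singleton] at hys
  rcases hys with hys | rfl
  exacts [List.mem_append_left _ hys, by simp]

end PositiveWeights

end

theorem dhs_union_of_hitting_sets_covers_general
    {V : Type*} (A : V → V → Prop) (w : V → V → ℝ)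
    (hw : ∀ x y, A x y → 0 < w x y)
    (C F : Set V)
    (t : ℕ)
    (X : Set V) (hXF : X ⊆ F)
    (C'' : Set V)
    (hC'' : C'' = {c ∈ tGoodCustomers A w C F t | ¬ CoveredBy A w X c})
    (fc xc : V → V)
    (hfc : ∀ c ∈ C'', fc c ∈ X ∩ Sgood A w F c)
    (hxc : ∀ c ∈ C'', spNbrs A w c (fc c) = {xc c})
    (Y : Set V) (hYF : Y ⊆ F)
    (hY : ∀ c ∈ C'', (Y ∩ Favoid A w F (xc c) c).Nonempty) :
    IsSetwiseCover A w (tGoodCustomers A w C F t) F (X ∪ Y) := by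
  refine ⟨Set.union_subset hXF hYF, fun c hc hcXY => ?_⟩
  by_cases hcov : CoveredBy A w X c
  · obtain hcX | ⟨f₁, hf₁, f₂, hf₂, hcover⟩ := hcov
    · exact absurd (Or.inl hcX) hcXY
    · exact ⟨f₁, Or.inl hf₁, f₂, Or.inl hf₂, hcover⟩
  have hc'' : c ∈ C'' := hC'' ▸ ⟨hc, hcov⟩
  have hfX : fc c ∈ X := (hfc c hc'').1
  obtain ⟨g, hgY, hgF⟩ := hY c hc''
  have hgc : g ≠ c := fun h => hcXY (Or.inr (h ▸ hgY))
  have hg : ∀ p, IsShortestDiPath A w c g p → xc c ∉ p := by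
    rcases hgF with hgc' | ⟨-, -, hg⟩
    exacts [absurd hgc' hgc, hg]
  have hfg : fc c ≠ g := by
    rintro rfl
    obtain ⟨-, p, hp, hxp⟩ : xc c ∈ spNbrs A w c (fc c) := by simp [hxc c hc'']
    exact hg p hp hxp
  exact ⟨fc c, Or.inl hfX, g, Or.inr hgY, hfg, fun h => hcXY (Or.inl (h ▸ hfX)), hgc,
    coversSetwise_of_spNbrs_eq_singleton hw (hxc c hc'') hg⟩

/-- Let `t ≥ 1`, let `X ⊆ F` hit every set `S_c` for `c` in the set
`C_t` of `t`-good customers, let `C''` be the `t`-good customers not covered by `X`,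
and for `c ∈ C''` pick `f_c ∈ X ∩ S_c` with (unique) neighbour `x_c` on all shortest
paths from `c` to `f_c`. Then for any hitting set `Y ⊆ F` of the family
`{F_c : c ∈ C''}`, the set `X ∪ Y` is a setwise-disjoint cover of `C_t`. -/
theorem dhs_union_of_hitting_sets_covers
    {V : Type*} [Fintype V] (A : V → V → Prop) (w : V → V → ℝ)
    (hw : ∀ x y, A x y → 0 < w x y) (hirr : ∀ v, ¬ A v v)
    (hconn : ∀ u v : V, ∃ p, IsDiPath A u v p)
    (C F : Set V) (hCF : C ⊆ F)
    (t : ℕ) (ht : 1 ≤ t)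
    (X : Set V) (hXF : X ⊆ F)
    (hX : ∀ c ∈ tGoodCustomers A w C F t, (X ∩ Sgood A w F c).Nonempty)
    (C'' : Set V)
    (hC'' : C'' = {c ∈ tGoodCustomers A w C F t | ¬ CoveredBy A w X c})
    (fc xc : V → V)
    (hfc : ∀ c ∈ C'', fc c ∈ X ∩ Sgood A w F c)
    (hxc : ∀ c ∈ C'', spNbrs A w c (fc c) = {xc c})
    (Y : Set V) (hYF : Y ⊆ F)
    (hY : ∀ c ∈ C'', (Y ∩ Favoid A w F (xc c) c).Nonempty) :
    IsSetwiseCover A w (tGoodCustomers A w C F t) F (X ∪ Y) :=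
  dhs_union_of_hitting_sets_covers_general A w hw C F t X hXF C'' hC'' fc xc hfc hxc Y hYF hY
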